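/- Let B₁ be the 4×4 matrix with rows (1,0,1,0),(1,0,0,1),(0,1,1,0),(0,1,0,1) and B₂ the matrix with rows (1,0,1,0),(1,1,0,0),(0,0,1,1),(0,1,0,1). Both B₁ and B₂ have rank 3 and nonnegative rank 4, but B = (B₁+B₂)/2 has nonnegative rank 3. Hence the set of 4×4 matrices of rank 3 whose nonnegative rank exceeds 3 is not convex. -/

import Mathlib

/-!
Rank never exceeds nonnegative rank. A nonsingular 3 × 3 minor gives rank ≥ 3 for `B₁`, `B₂` and
`B = (B₁ + B₂)/2`; the fourth row of `B₁` and of `B₂` is the sum of the middle two minus the first,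
and `B` is an explicit sum of three nonnegative dyads.

The bound `nnRank ≥ 4` for `B₁` and `B₂` comes from a fooling set of size 4: positive entries
`(iₜ, jₜ)` such that for `t ≠ s` one of the crossing entries `(iₜ, jₛ)`, `(iₛ, jₜ)` vanishes. Each
positive entry of a sum of nonnegative dyads is positive in one of the dyads, and a dyad positive
at two fooling entries would be positive at both crossings, so no dyad serves two of them.
-/

open Matrix BigOperators Filter Topology

/-- The nonnegative rank: least `k` such that `P` is a sum of `k` nonnegative dyads. -/
noncomputable def nnRank {n m : ℕ} (P : Matrix (Fin n) (Fin m) ℝ) : ℕ :=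
  sInf {k : ℕ | ∃ (c : Fin k → Fin n → ℝ) (r : Fin k → Fin m → ℝ),
    (∀ h i, 0 ≤ c h i) ∧ (∀ h j, 0 ≤ r h j) ∧
    P = ∑ h, Matrix.vecMulVec (c h) (r h)}

/-- Frobenius distance between two matrices. -/
noncomputable def frobDist {n m : ℕ} (P N : Matrix (Fin n) (Fin m) ℝ) : ℝ :=
  Real.sqrt (∑ i, ∑ j, (P i j - N i j) ^ 2)

section Rank

variable {R : Type*} [CommRing R] {m n ι : Type*} [Fintype ι]

theorem sum_vecMulVec_eq_mul (c : ι → m → R) (r : ι → n → R) :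
    ∑ h, vecMulVec (c h) (r h) = of (fun i h => c h i) * of r := by
  ext a b
  simp [Matrix.sum_apply, vecMulVec_apply, mul_apply]

theorem rank_sum_vecMulVec_le [Fintype n] [StrongRankCondition R]
    (c : ι → m → R) (r : ι → n → R) :
    (∑ h, vecMulVec (c h) (r h)).rank ≤ Fintype.card ι := by
  rw [sum_vecMulVec_eq_mul]
  exact (rank_mul_le_left _ _).trans (rank_le_card_width _)

theorem card_le_rank_of_det_submatrix_ne_zero [Fintype n] [IsDomain R]
    {k : Type*} [Fintype k] [DecidableEq k] (A : Matrix m n R) (e : k → m) (f : k → n)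
    (h : (A.submatrix e f).det ≠ 0) :
    Fintype.card k ≤ A.rank :=
  (rank_of_det_ne_zero h).symm.le.trans (rank_submatrix_le A e f)

end Rank

theorem sum_vecMulVec_apply_pos_iff {R : Type*} [CommSemiring R] [LinearOrder R]
    [IsStrictOrderedRing R] {m n ι : Type*} [Fintype ι] {c : ι → m → R} {r : ι → n → R}
    (hc : ∀ h a, 0 ≤ c h a) (hr : ∀ h b, 0 ≤ r h b) (a : m) (b : n) :
    0 < (∑ h, vecMulVec (c h) (r h)) a b ↔ ∃ h, 0 < c h a ∧ 0 < r h b := by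
  simp only [Matrix.sum_apply, vecMulVec_apply]
  rw [Finset.sum_pos_iff_of_nonneg fun h _ => mul_nonneg (hc h a) (hr h b)]
  simp only [Finset.mem_univ, true_and]
  refine exists_congr fun h => ⟨fun hpos => ?_, fun hpos => mul_pos hpos.1 hpos.2⟩
  exact (pos_and_pos_or_neg_and_neg_of_mul_pos hpos).resolve_right
    fun hneg => (hc h a).not_gt hneg.1

section NonnegativeRank

variable {n m : ℕ}

theorem nnRank_le_of_eq_sum {k : ℕ} {P : Matrix (Fin n) (Fin m) ℝ}
    (c : Fin k → Fin n → ℝ) (r : Fin k → Fin m → ℝ) (hc : ∀ h i, 0 ≤ c h i)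
    (hr : ∀ h j, 0 ≤ r h j) (hP : P = ∑ h, vecMulVec (c h) (r h)) : nnRank P ≤ k :=
  Nat.sInf_le ⟨c, r, hc, hr, hP⟩

theorem exists_eq_sum_vecMulVec_of_nonneg {P : Matrix (Fin n) (Fin m) ℝ}
    (hP : ∀ i j, 0 ≤ P i j) :
    ∃ (c : Fin m → Fin n → ℝ) (r : Fin m → Fin m → ℝ),
      (∀ h i, 0 ≤ c h i) ∧ (∀ h j, 0 ≤ r h j) ∧ P = ∑ h, vecMulVec (c h) (r h) := by
  refine ⟨fun h i => P i h, fun h => Pi.single h 1, fun h i => hP i h, fun h j => ?_, ?_⟩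
  · by_cases hj : j = h <;> simp [hj]
  · ext i j
    simp [Matrix.sum_apply, vecMulVec_apply, Pi.single_apply]

theorem nnRank_le_width {P : Matrix (Fin n) (Fin m) ℝ} (hP : ∀ i j, 0 ≤ P i j) :
    nnRank P ≤ m :=
  let ⟨c, r, hc, hr, hcr⟩ := exists_eq_sum_vecMulVec_of_nonneg hP
  nnRank_le_of_eq_sum c r hc hr hcr

theorem le_nnRank {P : Matrix (Fin n) (Fin m) ℝ} (hP : ∀ i j, 0 ≤ P i j) {b : ℕ}
    (hb : ∀ k (c : Fin k → Fin n → ℝ) (r : Fin k → Fin m → ℝ), (∀ h i, 0 ≤ c h i) →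
      (∀ h j, 0 ≤ r h j) → P = ∑ h, vecMulVec (c h) (r h) → b ≤ k) :
    b ≤ nnRank P :=
  le_csInf ⟨m, exists_eq_sum_vecMulVec_of_nonneg hP⟩ fun k ⟨c, r, hc, hr, hcr⟩ =>
    hb k c r hc hr hcr

theorem rank_le_nnRank {P : Matrix (Fin n) (Fin m) ℝ} (hP : ∀ i j, 0 ≤ P i j) :
    P.rank ≤ nnRank P :=
  le_nnRank hP fun k c r _ _ hcr =>
    hcr ▸ (rank_sum_vecMulVec_le c r).trans_eq (Fintype.card_fin k)

theorem card_le_nnRank_of_fooling {ι : Type*} [Fintype ι] {P : Matrix (Fin n) (Fin m) ℝ}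
    (hP : ∀ i j, 0 ≤ P i j) (i : ι → Fin n) (j : ι → Fin m) (hpos : ∀ t, 0 < P (i t) (j t))
    (hfool : ∀ t s, t ≠ s → P (i t) (j s) = 0 ∨ P (i s) (j t) = 0) :
    Fintype.card ι ≤ nnRank P := by
  refine le_nnRank hP fun k c r hc hr hcr => ?_
  subst hcr
  choose φ hφ using fun t => (sum_vecMulVec_apply_pos_iff hc hr (i t) (j t)).1 (hpos t)
  have hφ_inj : φ.Injective := by
    intro t s hts
    by_contra hne
    have h₁ := (sum_vecMulVec_apply_pos_iff hc hr (i t) (j s)).2 ⟨φ s, hts ▸ (hφ t).1, (hφ s).2⟩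
    have h₂ := (sum_vecMulVec_apply_pos_iff hc hr (i s) (j t)).2 ⟨φ s, (hφ s).1, hts ▸ (hφ t).2⟩
    rcases hfool t s hne with h | h
    · exact h₁.ne' h
    · exact h₂.ne' h
  simpa using Fintype.card_le_of_injective φ hφ_inj

end NonnegativeRank

def B₁ : Matrix (Fin 4) (Fin 4) ℝ := !![1,0,1,0; 1,0,0,1; 0,1,1,0; 0,1,0,1]

def B₂ : Matrix (Fin 4) (Fin 4) ℝ := !![1,0,1,0; 1,1,0,0; 0,0,1,1; 0,1,0,1]

noncomputable def B : Matrix (Fin 4) (Fin 4) ℝ :=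
  !![1,0,1,0; 1,1/2,0,1/2; 0,1/2,1,1/2; 0,1,0,1]

theorem half_smul_B₁_add_B₂ : (1/2 : ℝ) • (B₁ + B₂) = B := by
  ext i j
  fin_cases i <;> fin_cases j <;> norm_num [B₁, B₂, B]

theorem rank_B₁ : B₁.rank = 3 := by
  refine le_antisymm ?_ ?_
  · have hB₁ : B₁ =
        !![(1 : ℝ),0,0; 0,1,0; 0,0,1; -1,1,1] * !![(1 : ℝ),0,1,0; 1,0,0,1; 0,1,1,0] := by
      ext i j
      fin_cases i <;> fin_cases j <;> simp [B₁, mul_apply, Fin.sum_univ_succ]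
    exact hB₁ ▸ (rank_mul_le_left _ _).trans (rank_le_width _)
  · simpa using card_le_rank_of_det_submatrix_ne_zero B₁ ![0,1,2] ![0,1,2]
      (by rw [det_fin_three]; norm_num [B₁, cons_val_two])

theorem rank_B₂ : B₂.rank = 3 := by
  refine le_antisymm ?_ ?_
  · have hB₂ : B₂ =
        !![(1 : ℝ),0,0; 0,1,0; 0,0,1; -1,1,1] * !![(1 : ℝ),0,1,0; 1,1,0,0; 0,0,1,1] := by
      ext i j
      fin_cases i <;> fin_cases j <;> simp [B₂, mul_apply, Fin.sum_univ_succ]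
    exact hB₂ ▸ (rank_mul_le_left _ _).trans (rank_le_width _)
  · simpa using card_le_rank_of_det_submatrix_ne_zero B₂ ![0,1,2] ![0,1,2]
      (by rw [det_fin_three]; norm_num [B₂, cons_val_two])

theorem nnRank_B₁ : nnRank B₁ = 4 := by
  have hB₁ : ∀ i j, 0 ≤ B₁ i j := by
    intro i j; fin_cases i <;> fin_cases j <;> simp [B₁]
  refine le_antisymm (nnRank_le_width hB₁) ?_
  simpa using card_le_nnRank_of_fooling hB₁ ![0,1,2,3] ![0,3,2,1]
    (by intro t; fin_cases t <;> simp [B₁])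
    (by intro t s hts; fin_cases t <;> fin_cases s <;> simp_all [B₁])

theorem nnRank_B₂ : nnRank B₂ = 4 := by
  have hB₂ : ∀ i j, 0 ≤ B₂ i j := by
    intro i j; fin_cases i <;> fin_cases j <;> simp [B₂]
  refine le_antisymm (nnRank_le_width hB₂) ?_
  simpa using card_le_nnRank_of_fooling hB₂ ![0,1,2,3] ![2,0,3,1]
    (by intro t; fin_cases t <;> simp [B₂])
    (by intro t s hts; fin_cases t <;> fin_cases s <;> simp_all [B₂])

theorem nnRank_B : nnRank B = 3 := by
  have hB : ∀ i j, 0 ≤ B i j := by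
    intro i j; fin_cases i <;> fin_cases j <;> norm_num [B]
  refine le_antisymm ?_ ?_
  · refine nnRank_le_of_eq_sum ![![1,1,0,0], ![0,1/2,1/2,1], ![1,0,1,0]]
      ![![1,0,0,0], ![0,1,0,1], ![0,0,1,0]] ?_ ?_ ?_
    · intro h i; fin_cases h <;> fin_cases i <;> norm_num
    · intro h j; fin_cases h <;> fin_cases j <;> norm_num
    · ext i j
      fin_cases i <;> fin_cases j <;>
        norm_num [B, Matrix.sum_apply, vecMulVec_apply, Fin.sum_univ_succ]
  · have hrank : 3 ≤ B.rank := by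
      simpa using card_le_rank_of_det_submatrix_ne_zero B ![0,1,3] ![0,1,2]
        (by rw [det_fin_three]; norm_num [B, cons_val_two, cons_val_three])
    exact hrank.trans (rank_le_nnRank hB)

theorem complement_not_convex :
    (!![(1:ℝ),0,1,0; 1,0,0,1; 0,1,1,0; 0,1,0,1]).rank = 3 ∧
    nnRank !![(1:ℝ),0,1,0; 1,0,0,1; 0,1,1,0; 0,1,0,1] = 4 ∧
    (!![(1:ℝ),0,1,0; 1,1,0,0; 0,0,1,1; 0,1,0,1]).rank = 3 ∧
    nnRank !![(1:ℝ),0,1,0; 1,1,0,0; 0,0,1,1; 0,1,0,1] = 4 ∧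
    nnRank ((1/2 : ℝ) • (!![(1:ℝ),0,1,0; 1,0,0,1; 0,1,1,0; 0,1,0,1] +
      !![(1:ℝ),0,1,0; 1,1,0,0; 0,0,1,1; 0,1,0,1])) = 3 :=
  ⟨rank_B₁, nnRank_B₁, rank_B₂, nnRank_B₂, half_smul_B₁_add_B₂ ▸ nnRank_B⟩
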